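/- Let n ≥ 2, let p₁ < p₂ < ⋯ < pₙ < 0 be reals and w₁, …, wₙ > 0. Define φ(x) := Σ_{i=1}^n w_i·x^{p_i−1} for x > 0, let I₁ : (0,∞) → (0,∞) be its inverse, differentiable with I₁′(z) = 1/φ′(I₁(z)) for all z > 0, and let I₂(z) := (z/wₙ)^{1/(pₙ−1)}, so that I₂′(z) = (1/(pₙ−1))·(1/wₙ)^{1/(pₙ−1)}·z^{1/(pₙ−1)−1}. Then for every β ∈ [0,1) with β > 1 + p_{n−1} − pₙ, there exists K > 0 such that for all z > 0: |z·I₁′(z) − z·I₂′(z)| ≤ K·(1 + z^{β/(pₙ−1)}). -/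

import Mathlib

/-!
Write `x = I₁(z)`, so that `z = φ(x)`, `z I₁'(z) = φ(x) / φ'(x)` and, with `q = pₙ - 1 ≤ -1`,
`z I₂'(z) = (z / wₙ)^{1/q} / q`. For `x ≤ 1` both terms are bounded by `1`. For `x ≥ 1` the
leading term `wₙ x^q` of `φ` dominates, and both terms lie within `O(x^e)` of `x / q`, where
`e = p_{n-1} - pₙ + 1`: the first because `q φ(x) - x φ'(x) = Σ wᵢ (pₙ - pᵢ) x^{pᵢ-1}` has no
`i = n` term, the second because `t ↦ t^{1/q}` has slope at most `t^{1/q - 1}` beyond `t = x^q`.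
Finally `x^e ≤ x^β` and `x ≤ (z / Σ wᵢ)^{1/q}` turn `O(x^e)` into `O(z^{β/q})`.
-/

open Finset Real

lemma abs_one_div_le_one_of_le_neg_one {q : ℝ} (hq : q ≤ -1) : |1 / q| ≤ 1 := by
  rw [abs_one_div, div_le_one (by rw [abs_pos]; linarith), abs_of_neg (by linarith)]
  linarith

lemma abs_rpow_sub_rpow_le {a b r : ℝ} (hb : 0 < b) (hba : b ≤ a) (hr1 : -1 ≤ r) (hr0 : r ≤ 0) :
    |a ^ r - b ^ r| ≤ b ^ (r - 1) * (a - b) := by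
  have ha : 0 < a := hb.trans_le hba
  have hratio : b / a ≤ (a / b) ^ r :=
    calc b / a = (a / b) ^ (-1 : ℝ) := by rw [rpow_neg_one, inv_div]
      _ ≤ (a / b) ^ r := rpow_le_rpow_of_exponent_le ((one_le_div hb).2 hba) hr1
  rw [abs_of_nonpos (sub_nonpos.2 (rpow_le_rpow_of_nonpos hb hba hr0)), rpow_sub_one hb.ne']
  calc -(a ^ r - b ^ r) = b ^ r * (1 - (a / b) ^ r) := by
        rw [div_rpow ha.le hb.le]; field_simp; ring
    _ ≤ b ^ r * (1 - b / a) := by gcongr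
    _ = b ^ r * (a - b) / a := by field_simp
    _ ≤ b ^ r * (a - b) / b := by gcongr
    _ = b ^ r / b * (a - b) := by ring

lemma mul_crra_inverse_deriv_eq {z w : ℝ} (hz : 0 < z) (hw : 0 ≤ w) (r : ℝ) :
    z * (r * (1 / w) ^ r * z ^ (r - 1)) = r * (z / w) ^ r := by
  rw [div_eq_mul_one_div z w, mul_rpow hz.le (one_div_nonneg.2 hw), rpow_sub_one hz.ne']
  field_simp

namespace LinearSharing

variable {ι : Type*} [Fintype ι]

noncomputable def collectiveMarginal (w p : ι → ℝ) (x : ℝ) : ℝ := ∑ i, w i * x ^ (p i - 1)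

noncomputable def collectiveMarginalDeriv (w p : ι → ℝ) (x : ℝ) : ℝ :=
  ∑ i, w i * (p i - 1) * x ^ (p i - 2)

variable {w p : ι → ℝ} {x : ℝ}

lemma leading_le_collectiveMarginal (hw : ∀ i, 0 ≤ w i) (hx : 0 ≤ x) (j : ι) :
    w j * x ^ (p j - 1) ≤ collectiveMarginal w p x :=
  single_le_sum (f := fun i => w i * x ^ (p i - 1))
    (fun i _ => mul_nonneg (hw i) (rpow_nonneg hx _)) (mem_univ j)

lemma collectiveMarginal_pos (hw : ∀ i, 0 ≤ w i) {j : ι} (hwj : 0 < w j) (hx : 0 < x) :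
    0 < collectiveMarginal w p x :=
  (mul_pos hwj (rpow_pos_of_pos hx _)).trans_le (leading_le_collectiveMarginal hw hx.le j)

lemma collectiveMarginal_le_of_one_le (hw : ∀ i, 0 ≤ w i) {j : ι} (hj : ∀ i, p i ≤ p j)
    (hx : 1 ≤ x) : collectiveMarginal w p x ≤ (∑ i, w i) * x ^ (p j - 1) := by
  rw [collectiveMarginal, sum_mul]
  exact sum_le_sum fun i _ => mul_le_mul_of_nonneg_left
    (rpow_le_rpow_of_exponent_le hx (by linarith [hj i])) (hw i)

lemma collectiveMarginal_sub_leading_le (hw : ∀ i, 0 ≤ w i) {j : ι} {s : ℝ}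
    (hs : ∀ i, i ≠ j → p i ≤ s) (hx : 1 ≤ x) :
    collectiveMarginal w p x - w j * x ^ (p j - 1) ≤ (∑ i, w i) * x ^ (s - 1) := by
  classical
  rw [collectiveMarginal, ← add_sum_erase _ _ (mem_univ j), add_sub_cancel_left, sum_mul]
  calc ∑ i ∈ univ.erase j, w i * x ^ (p i - 1)
      ≤ ∑ i ∈ univ.erase j, w i * x ^ (s - 1) :=
        sum_le_sum fun i hi => mul_le_mul_of_nonneg_left
          (rpow_le_rpow_of_exponent_le hx (by linarith [hs i (ne_of_mem_erase hi)])) (hw i)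
    _ ≤ ∑ i, w i * x ^ (s - 1) :=
        sum_le_sum_of_subset_of_nonneg (subset_univ _) fun i _ _ =>
          mul_nonneg (hw i) (rpow_nonneg (by linarith) _)

lemma mul_collectiveMarginalDeriv (hx : x ≠ 0) :
    x * collectiveMarginalDeriv w p x = ∑ i, w i * (p i - 1) * x ^ (p i - 1) := by
  rw [collectiveMarginalDeriv, mul_sum]
  refine sum_congr rfl fun i _ => ?_
  rw [show p i - 1 = p i - 2 + 1 by ring, rpow_add_one hx]
  ring

lemma collectiveMarginal_le_mul_neg_deriv (hw : ∀ i, 0 ≤ w i) (hp : ∀ i, p i ≤ 0) (hx : 0 < x) :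
    collectiveMarginal w p x ≤ x * -collectiveMarginalDeriv w p x := by
  rw [mul_neg, mul_collectiveMarginalDeriv hx.ne', ← sum_neg_distrib, collectiveMarginal]
  refine sum_le_sum fun i _ => ?_
  nlinarith [hp i, mul_nonneg (hw i) (rpow_nonneg hx.le (p i - 1))]

lemma sq_mul_leading_deriv_le (hw : ∀ i, 0 ≤ w i) (hp : ∀ i, p i ≤ 1) (hx : 0 < x) (j : ι) :
    (p j - 1) ^ 2 * (w j * x ^ (p j - 2)) ≤ (p j - 1) * collectiveMarginalDeriv w p x := by
  rw [collectiveMarginalDeriv, mul_sum]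
  refine le_of_eq_of_le (by ring) (single_le_sum
    (f := fun i => (p j - 1) * (w i * (p i - 1) * x ^ (p i - 2))) (fun i _ => ?_) (mem_univ j))
  have hsign : 0 ≤ (p j - 1) * (p i - 1) :=
    mul_nonneg_of_nonpos_of_nonpos (by linarith [hp j]) (by linarith [hp i])
  nlinarith [mul_nonneg hsign (mul_nonneg (hw i) (rpow_nonneg hx.le (p i - 2)))]

lemma collectiveMarginalDeriv_neg (hw : ∀ i, 0 ≤ w i) {j : ι} (hwj : 0 < w j)
    (hp : ∀ i, p i ≤ 0) (hx : 0 < x) : collectiveMarginalDeriv w p x < 0 := by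
  have hq : p j - 1 < 0 := by linarith [hp j]
  have := sq_mul_leading_deriv_le hw (fun i => (hp i).trans zero_le_one) hx j
  nlinarith [mul_pos (pow_pos (neg_pos.2 hq) 2) (mul_pos hwj (rpow_pos_of_pos hx (p j - 2)))]

lemma leading_exponent_mul_sub_mul_deriv (hx : x ≠ 0) (j : ι) :
    (p j - 1) * collectiveMarginal w p x - x * collectiveMarginalDeriv w p x =
      ∑ i, w i * (p j - p i) * x ^ (p i - 1) := by
  rw [mul_collectiveMarginalDeriv hx, collectiveMarginal, mul_sum, ← sum_sub_distrib]
  exact sum_congr rfl fun i _ => by ring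

lemma leading_exponent_mul_sub_mul_deriv_nonneg (hw : ∀ i, 0 ≤ w i) {j : ι}
    (hj : ∀ i, p i ≤ p j) (hx : 0 < x) :
    0 ≤ (p j - 1) * collectiveMarginal w p x - x * collectiveMarginalDeriv w p x := by
  rw [leading_exponent_mul_sub_mul_deriv hx.ne']
  exact sum_nonneg fun i _ =>
    mul_nonneg (mul_nonneg (hw i) (sub_nonneg.2 (hj i))) (rpow_nonneg hx.le _)

lemma leading_exponent_mul_sub_mul_deriv_le (hw : ∀ i, 0 ≤ w i) {j : ι} {s : ℝ}
    (hj : ∀ i, p i ≤ p j) (hs : ∀ i, i ≠ j → p i ≤ s) (hx : 1 ≤ x) :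
    (p j - 1) * collectiveMarginal w p x - x * collectiveMarginalDeriv w p x ≤
      (∑ i, w i * (p j - p i)) * x ^ (s - 1) := by
  rw [leading_exponent_mul_sub_mul_deriv (zero_lt_one.trans_le hx).ne' j, sum_mul]
  refine sum_le_sum fun i _ => ?_
  obtain rfl | hij := eq_or_ne i j
  · simp
  · exact mul_le_mul_of_nonneg_left
      (rpow_le_rpow_of_exponent_le hx (by linarith [hs i hij]))
      (mul_nonneg (hw i) (sub_nonneg.2 (hj i)))

lemma abs_collectiveMarginal_div_deriv_sub_le (hw : ∀ i, 0 ≤ w i) {j : ι} (hwj : 0 < w j)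
    {s : ℝ} (hp : ∀ i, p i ≤ 0) (hj : ∀ i, p i ≤ p j) (hs : ∀ i, i ≠ j → p i ≤ s) (hx : 1 ≤ x) :
    |collectiveMarginal w p x / collectiveMarginalDeriv w p x - x / (p j - 1)| ≤
      (∑ i, w i * (p j - p i)) / ((p j - 1) ^ 2 * w j) * x ^ (s - p j + 1) := by
  have hx0 : 0 < x := by linarith
  have hq : p j - 1 < 0 := by linarith [hp j]
  have hleading : 0 < (p j - 1) ^ 2 * (w j * x ^ (p j - 2)) :=
    mul_pos (sq_pos_of_neg hq) (mul_pos hwj (rpow_pos_of_pos hx0 _))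
  have hqD := sq_mul_leading_deriv_le hw (fun i => (hp i).trans zero_le_one) hx0 j
  have hD := collectiveMarginalDeriv_neg hw hwj hp hx0
  have hA : 0 ≤ ∑ i, w i * (p j - p i) :=
    sum_nonneg fun i _ => mul_nonneg (hw i) (sub_nonneg.2 (hj i))
  have hsplit : collectiveMarginal w p x / collectiveMarginalDeriv w p x - x / (p j - 1) =
      ((p j - 1) * collectiveMarginal w p x - x * collectiveMarginalDeriv w p x) /
        ((p j - 1) * collectiveMarginalDeriv w p x) := by
    field_simp [hD.ne, hq.ne]
  rw [hsplit, abs_div, abs_of_nonneg (leading_exponent_mul_sub_mul_deriv_nonneg hw hj hx0),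
    abs_of_pos (hleading.trans_le hqD)]
  calc _ ≤ (∑ i, w i * (p j - p i)) * x ^ (s - 1) / ((p j - 1) ^ 2 * (w j * x ^ (p j - 2))) :=
        div_le_div₀ (by positivity) (leading_exponent_mul_sub_mul_deriv_le hw hj hs hx)
          hleading hqD
    _ = _ := by
        rw [show s - p j + 1 = (s - 1) - (p j - 2) by ring, rpow_sub hx0 (s - 1) (p j - 2),
          div_mul_div_comm, mul_assoc]

lemma abs_crra_inverse_sub_le (hw : ∀ i, 0 ≤ w i) {j : ι} (hwj : 0 < w j) {s : ℝ}
    (hpj : p j ≤ 0) (hs : ∀ i, i ≠ j → p i ≤ s) (hx : 1 ≤ x) :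
    |(collectiveMarginal w p x / w j) ^ (1 / (p j - 1)) - x| ≤
      (∑ i, w i) / w j * x ^ (s - p j + 1) := by
  have hx0 : 0 < x := by linarith
  have hq : p j - 1 < 0 := by linarith
  have hb : 0 < x ^ (p j - 1) := rpow_pos_of_pos hx0 _
  have hba : x ^ (p j - 1) ≤ collectiveMarginal w p x / w j := by
    rw [le_div_iff₀ hwj, mul_comm]
    exact leading_le_collectiveMarginal hw hx0.le j
  have hr1 : -1 ≤ 1 / (p j - 1) := by rw [le_div_iff_of_neg hq]; linarith
  have hslope := abs_rpow_sub_rpow_le hb hba hr1 (one_div_neg.2 hq).le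
  rw [one_div, rpow_rpow_inv hx0.le hq.ne, ← one_div] at hslope
  calc _ ≤ _ := hslope
    _ ≤ x ^ (1 - (p j - 1)) * ((∑ i, w i) * x ^ (s - 1) / w j) := by
        rw [← rpow_mul hx0.le, show (p j - 1) * (1 / (p j - 1) - 1) = 1 - (p j - 1) by
          rw [mul_sub, mul_one_div_cancel hq.ne, mul_one]]
        gcongr
        rw [div_sub' hwj.ne', div_le_div_iff_of_pos_right hwj]
        linarith [collectiveMarginal_sub_leading_le hw hs hx (p := p)]
    _ = _ := by
        rw [show s - p j + 1 = (1 - (p j - 1)) + (s - 1) by ring, rpow_add hx0]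
        ring

lemma rpow_le_collectiveMarginal_div_sum_rpow (hw : ∀ i, 0 ≤ w i) {j : ι} (hwj : 0 < w j)
    (hpj : p j < 1) (hj : ∀ i, p i ≤ p j) (hx : 1 ≤ x) {β : ℝ} (hβ : 0 ≤ β) :
    x ^ β ≤ (collectiveMarginal w p x / ∑ i, w i) ^ (β / (p j - 1)) := by
  have hx0 : 0 < x := by linarith
  have hq : p j - 1 < 0 := by linarith
  have hW : 0 < ∑ i, w i :=
    hwj.trans_le (single_le_sum (fun i _ => hw i) (mem_univ j))
  have hz : 0 < collectiveMarginal w p x / ∑ i, w i :=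
    div_pos (collectiveMarginal_pos hw hwj hx0) hW
  have hzx : collectiveMarginal w p x / ∑ i, w i ≤ x ^ (p j - 1) := by
    rw [div_le_iff₀ hW, mul_comm]
    exact collectiveMarginal_le_of_one_le hw hj hx
  have hxz : x ≤ (collectiveMarginal w p x / ∑ i, w i) ^ (p j - 1)⁻¹ := by
    simpa [rpow_rpow_inv hx0.le hq.ne] using
      rpow_le_rpow_of_nonpos hz hzx (inv_nonpos.2 hq.le)
  calc x ^ β ≤ ((collectiveMarginal w p x / ∑ i, w i) ^ (p j - 1)⁻¹) ^ β :=
        rpow_le_rpow hx0.le hxz hβ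
    _ = _ := by rw [← rpow_mul hz.le, inv_mul_eq_div]

/-- `z I₁'(z) - z I₂'(z)` written in terms of `x = I₁(z)`, i.e. `z = collectiveMarginal w p x`;
`j` indexes the largest exponent. -/
noncomputable def riskToleranceGap (w p : ι → ℝ) (j : ι) (x : ℝ) : ℝ :=
  collectiveMarginal w p x / collectiveMarginalDeriv w p x -
    1 / (p j - 1) * (collectiveMarginal w p x / w j) ^ (1 / (p j - 1))

lemma abs_riskToleranceGap_le_two (hw : ∀ i, 0 ≤ w i) {j : ι} (hwj : 0 < w j)
    (hp : ∀ i, p i ≤ 0) (hx0 : 0 < x) (hx1 : x ≤ 1) : |riskToleranceGap w p j x| ≤ 2 := by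
  have hq : p j - 1 ≤ -1 := by linarith [hp j]
  have hφ : 0 < collectiveMarginal w p x := collectiveMarginal_pos hw hwj hx0
  have hD := collectiveMarginalDeriv_neg hw hwj hp hx0
  have hfirst : |collectiveMarginal w p x / collectiveMarginalDeriv w p x| ≤ 1 := by
    rw [abs_div, abs_of_pos hφ, abs_of_neg hD, div_le_one (neg_pos.2 hD)]
    nlinarith [collectiveMarginal_le_mul_neg_deriv hw hp hx0]
  have hbase : 1 ≤ collectiveMarginal w p x / w j := by
    rw [le_div_iff₀ hwj, one_mul]
    calc w j ≤ w j * x ^ (p j - 1) := le_mul_of_one_le_right hwj.le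
          (one_le_rpow_of_pos_of_le_one_of_nonpos hx0 hx1 (by linarith))
      _ ≤ collectiveMarginal w p x := leading_le_collectiveMarginal hw hx0.le j
  have hsecond :
      |1 / (p j - 1) * (collectiveMarginal w p x / w j) ^ (1 / (p j - 1))| ≤ 1 := by
    rw [abs_mul, abs_of_nonneg (rpow_nonneg (by linarith) _)]
    exact mul_le_one₀ (abs_one_div_le_one_of_le_neg_one hq) (rpow_nonneg (by linarith) _)
      (rpow_le_one_of_one_le_of_nonpos hbase (one_div_neg.2 (by linarith)).le)
  rw [riskToleranceGap]
  linarith [abs_sub (collectiveMarginal w p x / collectiveMarginalDeriv w p x)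
    (1 / (p j - 1) * (collectiveMarginal w p x / w j) ^ (1 / (p j - 1)))]

lemma abs_riskToleranceGap_le_of_one_le (hw : ∀ i, 0 ≤ w i) {j : ι} (hwj : 0 < w j) {s β : ℝ}
    (hp : ∀ i, p i ≤ 0) (hj : ∀ i, p i ≤ p j) (hs : ∀ i, i ≠ j → p i ≤ s) (hx : 1 ≤ x)
    (hβ0 : 0 ≤ β) (hβ : s - p j + 1 ≤ β) :
    |riskToleranceGap w p j x| ≤
      ((∑ i, w i * (p j - p i)) / ((p j - 1) ^ 2 * w j) + (∑ i, w i) / w j) *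
        (collectiveMarginal w p x / ∑ i, w i) ^ (β / (p j - 1)) := by
  have hq : p j - 1 ≤ -1 := by linarith [hp j]
  have hC : 0 ≤ (∑ i, w i * (p j - p i)) / ((p j - 1) ^ 2 * w j) + (∑ i, w i) / w j := by
    have := sum_nonneg fun i (_ : i ∈ univ) => mul_nonneg (hw i) (sub_nonneg.2 (hj i))
    have := sum_nonneg fun i (_ : i ∈ univ) => hw i
    positivity
  set y := (collectiveMarginal w p x / w j) ^ (1 / (p j - 1))
  have hcrra : |x / (p j - 1) - 1 / (p j - 1) * y| ≤ |y - x| := by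
    rw [div_eq_mul_one_div, mul_comm x, ← mul_sub, abs_mul, abs_sub_comm]
    exact mul_le_of_le_one_left (abs_nonneg _) (abs_one_div_le_one_of_le_neg_one hq)
  calc |riskToleranceGap w p j x|
      ≤ |collectiveMarginal w p x / collectiveMarginalDeriv w p x - x / (p j - 1)| +
          |x / (p j - 1) - 1 / (p j - 1) * y| := abs_sub_le _ _ _
    _ ≤ (∑ i, w i * (p j - p i)) / ((p j - 1) ^ 2 * w j) * x ^ (s - p j + 1) +
          (∑ i, w i) / w j * x ^ (s - p j + 1) :=
        add_le_add (abs_collectiveMarginal_div_deriv_sub_le hw hwj hp hj hs hx)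
          (hcrra.trans (abs_crra_inverse_sub_le hw hwj (hp j) hs hx))
    _ = ((∑ i, w i * (p j - p i)) / ((p j - 1) ^ 2 * w j) + (∑ i, w i) / w j) *
          x ^ (s - p j + 1) := by ring
    _ ≤ ((∑ i, w i * (p j - p i)) / ((p j - 1) ^ 2 * w j) + (∑ i, w i) / w j) * x ^ β := by
        gcongr
    _ ≤ _ := by
        gcongr
        exact rpow_le_collectiveMarginal_div_sum_rpow hw hwj (by linarith [hp j]) hj hx hβ0

theorem exists_abs_riskToleranceGap_le (hw : ∀ i, 0 ≤ w i) {j : ι} (hwj : 0 < w j) {s β : ℝ}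
    (hp : ∀ i, p i ≤ 0) (hj : ∀ i, p i ≤ p j) (hs : ∀ i, i ≠ j → p i ≤ s)
    (hβ0 : 0 ≤ β) (hβ : s - p j + 1 ≤ β) :
    ∃ K, 0 < K ∧ ∀ x, 0 < x →
      |riskToleranceGap w p j x| ≤ K * (1 + collectiveMarginal w p x ^ (β / (p j - 1))) := by
  set C := ((∑ i, w i * (p j - p i)) / ((p j - 1) ^ 2 * w j) + (∑ i, w i) / w j) /
    (∑ i, w i) ^ (β / (p j - 1))
  have hW : 0 ≤ ∑ i, w i := sum_nonneg fun i _ => hw i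
  have hC : 0 ≤ C := by
    have := sum_nonneg fun i (_ : i ∈ univ) => mul_nonneg (hw i) (sub_nonneg.2 (hj i))
    positivity
  refine ⟨2 + C, by positivity, fun x hx0 => ?_⟩
  have hφ : 0 ≤ collectiveMarginal w p x := (collectiveMarginal_pos hw hwj hx0).le
  have ht : 0 ≤ collectiveMarginal w p x ^ (β / (p j - 1)) := rpow_nonneg hφ _
  rcases le_total x 1 with hx1 | hx1
  · nlinarith [abs_riskToleranceGap_le_two hw hwj hp hx0 hx1]
  · have h := abs_riskToleranceGap_le_of_one_le hw hwj hp hj hs hx1 hβ0 hβ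
    rw [div_rpow hφ hW, mul_div, ← div_mul_eq_mul_div] at h
    nlinarith

end LinearSharing

/-- Proposition 2.13, inequality (2): with `I₁` the inverse of `φ(x) = Σ wᵢ x^{pᵢ-1}`,
`I₁'(z) = 1/φ'(I₁(z))`, and the CRRA benchmark
`I₂'(z) = (1/(pₙ-1))(1/wₙ)^{1/(pₙ-1)} z^{1/(pₙ-1)-1}`, one has
`|z I₁'(z) - z I₂'(z)| ≤ K(1 + z^{β/(pₙ-1)})` for any `β ∈ [0,1)` with
`β > 1 + p_{n-1} - pₙ`. -/
theorem linear_sharing_inverse_marginal_derivative_bound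
    (n : ℕ) (hn : 2 ≤ n)
    (p : Fin n → ℝ) (hpmono : StrictMono p) (hpneg : ∀ i, p i < 0)
    (w : Fin n → ℝ) (hw : ∀ i, 0 < w i)
    (I₁ I₁' : ℝ → ℝ)
    (hI₁ : ∀ z : ℝ, 0 < z → 0 < I₁ z ∧ (∑ i, w i * I₁ z ^ (p i - 1)) = z)
    (hI₁d : ∀ z : ℝ, 0 < z → HasDerivAt I₁ (I₁' z) z ∧
      I₁' z = 1 / (∑ i, w i * (p i - 1) * I₁ z ^ (p i - 2)))
    (β : ℝ) (hβ0 : 0 ≤ β)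
    (hβ2 : 1 + p ⟨n - 2, by omega⟩ - p ⟨n - 1, by omega⟩ < β) :
    ∃ K : ℝ, 0 < K ∧ ∀ z : ℝ, 0 < z →
      |z * I₁' z -
          z * ((1 / (p ⟨n - 1, by omega⟩ - 1)) *
            (1 / w ⟨n - 1, by omega⟩) ^ (1 / (p ⟨n - 1, by omega⟩ - 1)) *
            z ^ (1 / (p ⟨n - 1, by omega⟩ - 1) - 1))| ≤
        K * (1 + z ^ (β / (p ⟨n - 1, by omega⟩ - 1))) := by
  have hj : ∀ i, p i ≤ p ⟨n - 1, by omega⟩ :=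
    fun i => hpmono.monotone (Fin.le_def.2 (show (i : ℕ) ≤ n - 1 by omega))
  have hs : ∀ i, i ≠ ⟨n - 1, by omega⟩ → p i ≤ p ⟨n - 2, by omega⟩ := fun i hi => by
    have hi' : (i : ℕ) ≠ n - 1 := fun h => hi (Fin.ext h)
    exact hpmono.monotone (Fin.le_def.2 (show (i : ℕ) ≤ n - 2 by omega))
  obtain ⟨K, hK, hgap⟩ := LinearSharing.exists_abs_riskToleranceGap_le
    (fun i => (hw i).le) (hw _) (fun i => (hpneg i).le) hj hs hβ0 (by linarith)
  refine ⟨K, hK, fun z hz => ?_⟩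
  obtain ⟨hx, hφ⟩ := hI₁ z hz
  have h := hgap (I₁ z) hx
  rw [LinearSharing.riskToleranceGap, LinearSharing.collectiveMarginal, hφ] at h
  rw [(hI₁d z hz).2, mul_one_div, mul_crra_inverse_deriv_eq hz (hw _).le]
  exact h
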